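/- Let h ∈ L²(P) be such that hX is integrable and such that E[hX | 𝒢]·V⁻¹·X lies in L²(P) and E[hX | 𝒢]·V⁻¹·X² is integrable (for instance, E[hX | 𝒢]·V⁻¹ essentially bounded). Define h_p := h − E[hX | 𝒢]·V⁻¹·X − E[h | 𝒢]. Then h_p ∈ Λ and h − h_p is orthogonal in L²(P) to every element of Λ; that is, h_p is the orthogonal projection of h onto Λ. -/

import Mathlib

open MeasureTheory

variable {Ω : Type*}

/-- The subspace `Λ = {h ∈ L²(P) : E[h | 𝒢] = 0 a.s. and E[hX | 𝒢] = 0 a.s.}`. -/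
def LambdaSet {m0 : MeasurableSpace Ω} (μ : Measure Ω) (m : MeasurableSpace Ω)
    (X : Ω → ℝ) : Set (Ω → ℝ) :=
  {g | MemLp g 2 μ ∧ μ[g|m] =ᵐ[μ] 0 ∧ μ[(fun ω => g ω * X ω)|m] =ᵐ[μ] 0}

/-- The candidate projection `h_p := h − E[hX | 𝒢]·V⁻¹·X − E[h | 𝒢]`,
where `V = E[X² | 𝒢]`. -/
noncomputable def projCandidate {m0 : MeasurableSpace Ω} (μ : Measure Ω)
    (m : MeasurableSpace Ω) (X h : Ω → ℝ) : Ω → ℝ :=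
  fun ω => h ω - (μ[(fun ω' => h ω' * X ω')|m]) ω * ((μ[(fun ω' => (X ω')^2)|m]) ω)⁻¹ * X ω
    - (μ[h|m]) ω

/-!
With the `𝒢`-measurable coefficient `β = E[hX | 𝒢] / V` one has `h - h_p = E[h | 𝒢] + βX`.
Pulling `𝒢`-measurable factors out of conditional expectations gives `E[βX | 𝒢] = β E[X | 𝒢] = 0`
and `E[βX² | 𝒢] = βV = E[hX | 𝒢]`, hence `h_p ∈ Λ`; and for `g ∈ Λ` and `𝒢`-measurable `a`,
`E[(a + βX) g] = E[a E[g | 𝒢]] + E[β E[Xg | 𝒢]] = 0`.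
-/

noncomputable def condRegCoeff {m0 : MeasurableSpace Ω} (μ : Measure Ω)
    (m : MeasurableSpace Ω) (X h : Ω → ℝ) : Ω → ℝ :=
  fun ω => (μ[(fun ω' => h ω' * X ω')|m]) ω * ((μ[(fun ω' => (X ω')^2)|m]) ω)⁻¹

section

variable {m m0 : MeasurableSpace Ω} {μ : Measure Ω}

lemma condExp_mul_eq_zero_of_stronglyMeasurable_left {b Y : Ω → ℝ} (hb : StronglyMeasurable[m] b)
    (hbY : Integrable (b * Y) μ) (hY : Integrable Y μ) (hY0 : μ[Y|m] =ᵐ[μ] 0) :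
    μ[b * Y|m] =ᵐ[μ] 0 := by
  filter_upwards [condExp_mul_of_stronglyMeasurable_left hb hbY hY, hY0] with ω hbYω hYω
  simp [hbYω, hYω]

lemma condExp_sub_sub {f g k : Ω → ℝ} (hf : Integrable f μ) (hg : Integrable g μ)
    (hk : Integrable k μ) : μ[f - g - k|m] =ᵐ[μ] μ[f|m] - μ[g|m] - μ[k|m] :=
  (condExp_sub (hf.sub hg) hk m).trans ((condExp_sub hf hg m).sub .rfl)

lemma integral_mul_eq_zero_of_condExp_eq_zero (hm : m ≤ m0) [SigmaFinite (μ.trim hm)]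
    {b Y : Ω → ℝ} (hb : StronglyMeasurable[m] b) (hbY : Integrable (b * Y) μ)
    (hY : Integrable Y μ) (hY0 : μ[Y|m] =ᵐ[μ] 0) :
    ∫ ω, b ω * Y ω ∂μ = 0 := by
  calc ∫ ω, b ω * Y ω ∂μ = ∫ ω, μ[b * Y|m] ω ∂μ := (integral_condExp hm).symm
    _ = 0 := by
      simp [integral_congr_ae (condExp_mul_eq_zero_of_stronglyMeasurable_left hb hbY hY hY0)]

lemma integral_mul_eq_zero_of_mem_LambdaSet [IsFiniteMeasure μ] (hm : m ≤ m0)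
    {X a b g : Ω → ℝ} (ha : StronglyMeasurable[m] a) (hb : StronglyMeasurable[m] b)
    (ha2 : MemLp a 2 μ) (hbX2 : MemLp (b * X) 2 μ) (hX2 : MemLp X 2 μ)
    (hg : g ∈ LambdaSet μ m X) :
    ∫ ω, (a ω + b ω * X ω) * g ω ∂μ = 0 := by
  obtain ⟨hg2, hg0, hgX0⟩ := hg
  have hXg0 : μ[X * g|m] =ᵐ[μ] 0 := by
    rw [mul_comm]
    exact hgX0
  have hbXg : Integrable (b * (X * g)) μ := by
    simpa only [mul_assoc] using hbX2.integrable_mul hg2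
  calc ∫ ω, (a ω + b ω * X ω) * g ω ∂μ
      = ∫ ω, a ω * g ω ∂μ + ∫ ω, b ω * (X * g) ω ∂μ := by
        simp only [add_mul, Pi.mul_apply, mul_assoc]
        exact integral_add (ha2.integrable_mul hg2) hbXg
    _ = 0 := by
      rw [integral_mul_eq_zero_of_condExp_eq_zero hm ha (ha2.integrable_mul hg2)
          (hg2.integrable one_le_two) hg0,
        integral_mul_eq_zero_of_condExp_eq_zero hm hb hbXg (hX2.integrable_mul hg2) hXg0,
        add_zero]

variable {X h : Ω → ℝ}

lemma projCandidate_eq : projCandidate μ m X h = h - condRegCoeff μ m X h * X - μ[h|m] := rfl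

lemma stronglyMeasurable_condRegCoeff : StronglyMeasurable[m] (condRegCoeff μ m X h) :=
  (stronglyMeasurable_condExp.measurable.mul
    stronglyMeasurable_condExp.measurable.inv).stronglyMeasurable

lemma condExp_condRegCoeff_mul_sq (hVpos : ∀ᵐ ω ∂μ, 0 < (μ[(fun ω' => (X ω')^2)|m]) ω)
    (hX2 : MemLp X 2 μ) (hβXX : Integrable (condRegCoeff μ m X h * X ^ 2) μ) :
    μ[condRegCoeff μ m X h * X ^ 2|m] =ᵐ[μ] μ[h * X|m] := by
  filter_upwards [condExp_mul_of_stronglyMeasurable_left stronglyMeasurable_condRegCoeff hβXX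
    hX2.integrable_sq, hVpos] with ω hω hVω
  rw [hω]
  exact inv_mul_cancel_right₀ hVω.ne' _

lemma projCandidate_mem_LambdaSet [IsFiniteMeasure μ] (hm : m ≤ m0) (hX2 : MemLp X 2 μ)
    (hXcond : μ[X|m] =ᵐ[μ] 0)
    (hVpos : ∀ᵐ ω ∂μ, 0 < (μ[(fun ω' => (X ω')^2)|m]) ω)
    (hh2 : MemLp h 2 μ) (hβX2 : MemLp (condRegCoeff μ m X h * X) 2 μ) :
    projCandidate μ m X h ∈ LambdaSet μ m X := by
  rw [projCandidate_eq]
  set β := condRegCoeff μ m X h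
  have hh : Integrable h μ := hh2.integrable one_le_two
  have hβX : Integrable (β * X) μ := hβX2.integrable one_le_two
  have hX : Integrable X μ := hX2.integrable one_le_two
  have hcond2 : MemLp (μ[h|m]) 2 μ := hh2.condExp one_le_two
  have hβX0 : μ[β * X|m] =ᵐ[μ] 0 :=
    condExp_mul_eq_zero_of_stronglyMeasurable_left stronglyMeasurable_condRegCoeff hβX hX hXcond
  have hβXX : Integrable (β * X ^ 2) μ := by
    simpa only [sq, mul_assoc] using hβX2.integrable_mul hX2
  have hβXX_cond : μ[β * X ^ 2|m] =ᵐ[μ] μ[h * X|m] :=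
    condExp_condRegCoeff_mul_sq hVpos hX2 hβXX
  have hcondX0 : μ[μ[h|m] * X|m] =ᵐ[μ] 0 :=
    condExp_mul_eq_zero_of_stronglyMeasurable_left stronglyMeasurable_condExp
      (hcond2.integrable_mul hX2) hX hXcond
  refine ⟨(hh2.sub hβX2).sub hcond2, ?_, ?_⟩
  · filter_upwards [condExp_sub_sub (m := m) hh hβX (hcond2.integrable one_le_two), hβX0,
      condExp_condExp_of_le (f := h) le_rfl hm] with ω hω hβXω hcondω
    simp [hω, hβXω, hcondω]
  · have hexpand : (fun ω => (h - β * X - μ[h|m]) ω * X ω) = h * X - β * X ^ 2 - μ[h|m] * X := by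
      ext ω
      simp only [Pi.sub_apply, Pi.mul_apply, Pi.pow_apply]
      ring
    rw [hexpand]
    filter_upwards [condExp_sub_sub (m := m) (hh2.integrable_mul hX2) hβXX
      (hcond2.integrable_mul hX2), hβXX_cond, hcondX0] with ω hω hβXXω hcondXω
    simp [hω, hβXXω, hcondXω]

end

theorem projection_onto_Lambda
    {m0 : MeasurableSpace Ω} (μ : Measure Ω) [IsProbabilityMeasure μ]
    (m : MeasurableSpace Ω) (hm : m ≤ m0)
    (X : Ω → ℝ) (hX2 : MemLp X 2 μ)
    (hXcond : μ[X|m] =ᵐ[μ] 0)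
    (hVpos : ∀ᵐ ω ∂μ, 0 < (μ[(fun ω' => (X ω')^2)|m]) ω)
    (h : Ω → ℝ) (hh2 : MemLp h 2 μ)
    (hL2 : MemLp (fun ω =>
      (μ[(fun ω' => h ω' * X ω')|m]) ω * ((μ[(fun ω' => (X ω')^2)|m]) ω)⁻¹ * X ω) 2 μ) :
    projCandidate μ m X h ∈ LambdaSet μ m X ∧
      ∀ g ∈ LambdaSet μ m X,
        ∫ ω, (h ω - projCandidate μ m X h ω) * g ω ∂μ = 0 := by
  have hβX2 : MemLp (condRegCoeff μ m X h * X) 2 μ := hL2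
  refine ⟨projCandidate_mem_LambdaSet hm hX2 hXcond hVpos hh2 hβX2, fun g hg => ?_⟩
  have hdecomp : ∀ ω, h ω - projCandidate μ m X h ω = μ[h|m] ω + condRegCoeff μ m X h ω * X ω :=
    fun ω => by simp only [projCandidate_eq, Pi.sub_apply, Pi.mul_apply]; ring
  simp_rw [hdecomp]
  exact integral_mul_eq_zero_of_mem_LambdaSet hm stronglyMeasurable_condExp
    stronglyMeasurable_condRegCoeff (hh2.condExp one_le_two) hβX2 hX2 hg
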